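/- With (π₁,…,π_m, V, K) a Stinespring dilation of a symmetric invariant completely positive (2m−1)-linear map φ, and T ∈ ⋂_p π_p(A)′ with 0 ≤ T ≤ I, the map φ_T is completely positive: for all n, all a_{p,j} ∈ A and h_j ∈ H, Σ_{i,j=1}^n ⟨φ_T(a_{m,i}*,…, a_{2,i}*, a_{1,i}* a_{1,j}, a_{2,j},…, a_{m,j}) h_j, h_i⟩ ≥ 0. Moreover φ_T ≤ φ, i.e., φ − φ_T = φ_{I−T} is also completely positive. -/

import Mathlib

/-!
Since the `π_p` are commuting `*`-representations, the operator in the dilation formula for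
`φ(b_m*,…,b₂*, b₁*a₁, a₂,…,a_m)` factors as `(π₁(b₁)⋯π_m(b_m))* π₁(a₁)⋯π_m(a_m)`, and `T` commutes
with both factors. Hence the Gram sum of `φ_T` is `⟪ξ, T ξ⟫` with
`ξ = Σ_j π₁(a_{1,j})⋯π_m(a_{m,j}) V h_j`, which is `≥ 0` because `T ≥ 0`; as `φ = φ_I`, the Gram sum
of `φ − φ_T` is `⟪ξ, (I − T) ξ⟫ ≥ 0`.
-/

open scoped ComplexOrder

variable {A : Type*} [Ring A] [StarRing A] [Algebra ℂ A] [StarModule ℂ A]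
variable {H : Type*} [NormedAddCommGroup H] [InnerProductSpace ℂ H] [CompleteSpace H]
variable {r : ℕ}

/-- The canonical semi-inner product of elementary tensors `a₁⊗…⊗a_m⊗g` and `b₁⊗…⊗b_m⊗h`
(`m = r+1`, odd case `k = 2m−1 = 2r+1`) associated to a `k`-linear map `φ`, namely
`⟨φ(b_m*,…,b₂*, b₁*a₁, a₂,…,a_m)g, h⟩`.  A `(2r+1)`-linear map `A^{2r+1} → B(H)` is encoded
in uncurried form `φ : (Fin r → A) → A → (Fin r → A) → (H →L[ℂ] H)`, the middle argument
being the `m`-th variable.  (The paper's inner product `⟨u, v⟩` is linear in `u`; Mathlib's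
`inner u v` is linear in `v`, so the paper's `⟨u, v⟩` is `inner v u` here.) -/
noncomputable def gram (φ : (Fin r → A) → A → (Fin r → A) → (H →L[ℂ] H))
    (a : Fin (r + 1) → A) (g : H) (b : Fin (r + 1) → A) (h : H) : ℂ :=
  inner ℂ h ((φ (fun i => star (b i.rev.succ)) (star (b 0) * a 0) (fun i => a i.succ)) g)

/-- `φ` is `(2r+1)`-linear: complex-linear in each of its `2r+1` variables. -/
def IsMultilinearOdd (φ : (Fin r → A) → A → (Fin r → A) → (H →L[ℂ] H)) : Prop :=
  (∀ x z, IsLinearMap ℂ fun y => φ x y z) ∧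
  (∀ x y z (i : Fin r), IsLinearMap ℂ fun u => φ (Function.update x i u) y z) ∧
  (∀ x y z (i : Fin r), IsLinearMap ℂ fun u => φ x y (Function.update z i u))

/-- `φ` is symmetric: `φ(a₁,…,a_k)* = φ(a_k*,…,a₁*)`. -/
def IsSymmMapOdd (φ : (Fin r → A) → A → (Fin r → A) → (H →L[ℂ] H)) : Prop :=
  ∀ x y z, star (φ x y z) = φ (fun i => star (z i.rev)) (star y) (fun i => star (x i.rev))

/-- `φ` is invariant:
`φ(a₁c₁,…,a_{m−1}c_{m−1}, a_m, a_{m+1},…,a_{2m−1}) = φ(a₁,…,a_m, c_{m−1}a_{m+1},…,c₁a_{2m−1})`. -/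
def IsInvariantOdd (φ : (Fin r → A) → A → (Fin r → A) → (H →L[ℂ] H)) : Prop :=
  ∀ (x c : Fin r → A) (y : A) (z : Fin r → A),
    φ (fun i => x i * c i) y z = φ x y (fun i => c i.rev * z i)

/-- `φ` is completely positive: the canonical sesquilinear form on `A^{⊗m} ⊗ H` is positive
semi-definite, i.e. all Gram sums over finite families of elementary tensors are `≥ 0`. -/
def IsCPOdd (φ : (Fin r → A) → A → (Fin r → A) → (H →L[ℂ] H)) : Prop :=
  ∀ (n : ℕ) (a : Fin n → Fin (r + 1) → A) (g : Fin n → H),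
    0 ≤ ∑ j, ∑ i, gram φ (a j) (g j) (a i) (g i)

/-- The action of `π_p(a)`: multiply the `p`-th tensor slot on the left by `a`. -/
def mulSlot (p : Fin (r + 1)) (a : A) (c : Fin (r + 1) → A) : Fin (r + 1) → A :=
  Function.update c p (a * c p)

variable {K : Type*} [NormedAddCommGroup K] [InnerProductSpace ℂ K] [CompleteSpace K]

/-- `π : p ↦ π_p` is a commuting family of unital `*`-homomorphisms `A → B(K)`. -/
def IsRepFamily (π : Fin (r + 1) → A → (K →L[ℂ] K)) : Prop :=
  (∀ p, π p 1 = 1) ∧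
  (∀ p a b, π p (a * b) = π p a * π p b) ∧
  (∀ p a b, π p (a + b) = π p a + π p b) ∧
  (∀ (p) (c : ℂ) (a), π p (c • a) = c • π p a) ∧
  (∀ p a, π p (star a) = star (π p a)) ∧
  (∀ p q a b, p ≠ q → Commute (π p a) (π q b))

/-- The product `π₁(a₁)π₂(a₂)⋯π_m(a_m)` (slots indexed by `Fin (r+1)`, `m = r+1`). -/
noncomputable def dilProd (π : Fin (r + 1) → A → (K →L[ℂ] K)) (a : Fin (r + 1) → A) :
    K →L[ℂ] K :=
  (List.ofFn fun p => π p (a p)).prod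

/-- The operator `π₁(a_m)π₂(a_{m−1}a_{m+1})⋯π_m(a₁a_{2m−1})`, where the `(2m−1)`-tuple
`(a₁,…,a_{2m−1})` is encoded as `x = (a₁,…,a_{m−1})`, `y = a_m`, `z = (a_{m+1},…,a_{2m−1})`. -/
noncomputable def dilOp (π : Fin (r + 1) → A → (K →L[ℂ] K))
    (x : Fin r → A) (y : A) (z : Fin r → A) : K →L[ℂ] K :=
  π 0 y * (List.ofFn fun i : Fin r => π i.succ (x i.rev * z i)).prod

/-- `(π, V, K)` is a Stinespring dilation of the `(2m−1)`-linear map `φ`:  `V` is a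
contraction and `φ(a₁,…,a_{2m−1}) = V* π₁(a_m)π₂(a_{m−1}a_{m+1})⋯π_m(a₁a_{2m−1}) V`. -/
def IsDilation (φ : (Fin r → A) → A → (Fin r → A) → (H →L[ℂ] H))
    (π : Fin (r + 1) → A → (K →L[ℂ] K)) (V : H →L[ℂ] K) : Prop :=
  ‖V‖ ≤ 1 ∧ ∀ x y z, φ x y z = ContinuousLinearMap.adjoint V ∘L (dilOp π x y z ∘L V)

/-- Minimality: `K` is the closed span of `{π₁(a₁)⋯π_m(a_m) V h}`. -/
def IsMinimalDil (π : Fin (r + 1) → A → (K →L[ℂ] K)) (V : H →L[ℂ] K) : Prop :=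
  (Submodule.span ℂ
    {ξ : K | ∃ (a : Fin (r + 1) → A) (h : H), ξ = dilProd π a (V h)}).topologicalClosure = ⊤

/-- `T` lies in the commutant `⋂_p π_p(A)′`. -/
def InCommutant (π : Fin (r + 1) → A → (K →L[ℂ] K)) (T : K →L[ℂ] K) : Prop :=
  ∀ (p : Fin (r + 1)) (a : A), Commute T (π p a)

/-- The map `φ_T(a₁,…,a_{2m−1}) = V* T π₁(a_m)π₂(a_{m−1}a_{m+1})⋯π_m(a₁a_{2m−1}) V`. -/
noncomputable def phiT (π : Fin (r + 1) → A → (K →L[ℂ] K)) (V : H →L[ℂ] K)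
    (T : K →L[ℂ] K) (x : Fin r → A) (y : A) (z : Fin r → A) : H →L[ℂ] H :=
  ContinuousLinearMap.adjoint V ∘L ((T ∘L dilOp π x y z) ∘L V)

theorem prod_ofFn_mul_prod_ofFn_of_commute {M : Type*} [Monoid M] {n : ℕ} (f g : Fin n → M)
    (hfg : ∀ p q, p ≠ q → Commute (f p) (g q)) :
    (List.ofFn f).prod * (List.ofFn g).prod = (List.ofFn fun p => f p * g p).prod := by
  induction n with
  | zero => simp
  | succ n ih =>
    have hg0 : Commute (g 0) (List.ofFn fun i : Fin n => f i.succ).prod :=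
      Commute.list_prod_right _ _ fun x hx => by
        obtain ⟨i, rfl⟩ := List.mem_ofFn.mp hx
        exact (hfg i.succ 0 i.succ_ne_zero).symm
    have htail := ih (fun i => f i.succ) (fun i => g i.succ)
      fun p q hpq => hfg p.succ q.succ (Fin.succ_injective _ |>.ne hpq)
    simp only [List.ofFn_succ, List.prod_cons]
    rw [mul_assoc, ← mul_assoc _ (g 0), ← hg0.eq, mul_assoc, htail, ← mul_assoc]

theorem star_prod_ofFn_of_commute {M : Type*} [Monoid M] [StarMul M] {n : ℕ} (f : Fin n → M)
    (hf : ∀ p q, p ≠ q → Commute (f p) (f q)) :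
    star (List.ofFn f).prod = (List.ofFn fun p => star (f p)).prod := by
  induction n with
  | zero => simp
  | succ n ih =>
    have hf0 : Commute (star (f 0)) (List.ofFn fun i : Fin n => star (f i.succ)).prod :=
      Commute.list_prod_right _ _ fun x hx => by
        obtain ⟨i, rfl⟩ := List.mem_ofFn.mp hx
        exact (hf 0 i.succ i.succ_ne_zero.symm).star_star
    simp only [List.ofFn_succ, List.prod_cons, star_mul]
    rw [ih _ fun p q hpq => hf p.succ q.succ (Fin.succ_injective _ |>.ne hpq), hf0.eq]

section Dilation

variable {π : Fin (r + 1) → A → (K →L[ℂ] K)}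

omit [StarModule ℂ A] in
theorem IsRepFamily.star_dilProd (hrep : IsRepFamily π) (b : Fin (r + 1) → A) :
    star (dilProd π b) = dilProd π (star b) := by
  rw [dilProd, star_prod_ofFn_of_commute _ fun p q hpq => hrep.2.2.2.2.2 p q _ _ hpq]
  simp only [dilProd, Pi.star_apply, hrep.2.2.2.2.1]

omit [Algebra ℂ A] [StarModule ℂ A] [CompleteSpace K] in
theorem dilOp_star_mul_eq_prod (a b : Fin (r + 1) → A) :
    dilOp π (fun i => star (b i.rev.succ)) (star (b 0) * a 0) (fun i => a i.succ) =
      (List.ofFn fun p => π p (star (b p) * a p)).prod := by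
  simp only [dilOp, Fin.rev_rev, List.ofFn_succ, List.prod_cons]

omit [StarModule ℂ A] in
theorem IsRepFamily.dilOp_star_mul (hrep : IsRepFamily π) (a b : Fin (r + 1) → A) :
    dilOp π (fun i => star (b i.rev.succ)) (star (b 0) * a 0) (fun i => a i.succ) =
      star (dilProd π b) * dilProd π a := by
  rw [dilOp_star_mul_eq_prod, hrep.star_dilProd, dilProd, dilProd,
    prod_ofFn_mul_prod_ofFn_of_commute _ _ fun p q hpq => hrep.2.2.2.2.2 p q _ _ hpq]
  simp only [Pi.star_apply, hrep.2.1]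

omit [Ring A] [StarRing A] [Algebra ℂ A] [StarModule ℂ A] [CompleteSpace K] in
theorem InCommutant.commute_dilProd {T : K →L[ℂ] K} (hT : InCommutant π T)
    (a : Fin (r + 1) → A) : Commute T (dilProd π a) :=
  Commute.list_prod_right _ _ fun x hx => by
    obtain ⟨p, rfl⟩ := List.mem_ofFn.mp hx
    exact hT p (a p)

variable (V : H →L[ℂ] K) {T : K →L[ℂ] K}

omit [StarModule ℂ A] in
theorem gram_phiT_eq_inner (hrep : IsRepFamily π) (hT : InCommutant π T)
    (a : Fin (r + 1) → A) (g : H) (b : Fin (r + 1) → A) (h : H) :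
    gram (phiT π V T) a g b h = inner ℂ (dilProd π b (V h)) (T (dilProd π a (V g))) := by
  have hTb : T * star (dilProd π b) = star (dilProd π b) * T := by
    rw [hrep.star_dilProd]
    exact (hT.commute_dilProd _).eq
  calc gram (phiT π V T) a g b h
      = inner ℂ (V h) ((T * star (dilProd π b) * dilProd π a) (V g)) := by
        rw [gram, phiT, hrep.dilOp_star_mul, mul_assoc,
          ContinuousLinearMap.comp_apply, ContinuousLinearMap.adjoint_inner_right]
        rfl
    _ = inner ℂ (V h) (star (dilProd π b) (T (dilProd π a (V g)))) := by rw [hTb]; rfl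
    _ = inner ℂ (dilProd π b (V h)) (T (dilProd π a (V g))) := by
        rw [ContinuousLinearMap.star_eq_adjoint, ContinuousLinearMap.adjoint_inner_right]

omit [StarModule ℂ A] in
theorem sum_gram_phiT_eq_inner (hrep : IsRepFamily π) (hT : InCommutant π T) {n : ℕ}
    (a : Fin n → Fin (r + 1) → A) (g : Fin n → H) :
    ∑ j, ∑ i, gram (phiT π V T) (a j) (g j) (a i) (g i) =
      inner ℂ (∑ i, dilProd π (a i) (V (g i))) (T (∑ j, dilProd π (a j) (V (g j)))) := by
  simp only [gram_phiT_eq_inner V hrep hT, map_sum, inner_sum, sum_inner]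

omit [StarModule ℂ A] in
theorem isCPOdd_phiT (hrep : IsRepFamily π) (hT : InCommutant π T) (hT0 : T.IsPositive) :
    IsCPOdd (phiT π V T) := fun n a g => by
  rw [sum_gram_phiT_eq_inner V hrep hT]
  exact hT0.inner_nonneg_right _

omit [StarRing A] [Algebra ℂ A] [StarModule ℂ A] in
theorem IsDilation.eq_phiT_one {φ : (Fin r → A) → A → (Fin r → A) → (H →L[ℂ] H)}
    (hdil : IsDilation φ π V) : φ = phiT π V 1 := by
  funext x y z
  rw [hdil.2, phiT, ContinuousLinearMap.one_def, ContinuousLinearMap.id_comp]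

end Dilation

theorem stmt15_general (φ : (Fin r → A) → A → (Fin r → A) → (H →L[ℂ] H))
    (π : Fin (r + 1) → A → (K →L[ℂ] K)) (V : H →L[ℂ] K)
    (hrep : IsRepFamily π) (hdil : IsDilation φ π V)
    (T : K →L[ℂ] K) (hT : InCommutant π T)
    (hT0 : T.IsPositive) (hT1 : ((1 : K →L[ℂ] K) - T).IsPositive) :
    IsCPOdd (phiT π V T) ∧
    (∀ (n : ℕ) (a : Fin n → Fin (r + 1) → A) (g : Fin n → H),
      0 ≤ ∑ j, ∑ i,
        (gram φ (a j) (g j) (a i) (g i) -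
          gram (phiT π V T) (a j) (g j) (a i) (g i))) := by
  refine ⟨isCPOdd_phiT V hrep hT hT0, fun n a g => ?_⟩
  have hone : InCommutant π (1 : K →L[ℂ] K) := fun p a => Commute.one_left _
  simp only [Finset.sum_sub_distrib]
  rw [hdil.eq_phiT_one, sum_gram_phiT_eq_inner V hrep hone, sum_gram_phiT_eq_inner V hrep hT,
    ← inner_sub_right]
  exact hT1.inner_nonneg_right _

/-- For a Stinespring dilation `(π, V, K)` of a symmetric invariant completely positive
`(2m−1)`-linear map `φ` and `T ∈ ⋂_p π_p(A)′` with `0 ≤ T ≤ I`, the map `φ_T` is completely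
positive, and moreover `φ_T ≤ φ`: the difference `φ − φ_T` is also completely positive. -/
theorem stmt15 (φ : (Fin r → A) → A → (Fin r → A) → (H →L[ℂ] H))
    (hlin : IsMultilinearOdd φ) (hsymm : IsSymmMapOdd φ)
    (hinv : IsInvariantOdd φ) (hcp : IsCPOdd φ)
    (π : Fin (r + 1) → A → (K →L[ℂ] K)) (V : H →L[ℂ] K)
    (hrep : IsRepFamily π) (hdil : IsDilation φ π V) (hmin : IsMinimalDil π V)
    (T : K →L[ℂ] K) (hT : InCommutant π T)
    (hT0 : T.IsPositive) (hT1 : ((1 : K →L[ℂ] K) - T).IsPositive) :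
    IsCPOdd (phiT π V T) ∧
    (∀ (n : ℕ) (a : Fin n → Fin (r + 1) → A) (g : Fin n → H),
      0 ≤ ∑ j, ∑ i,
        (gram φ (a j) (g j) (a i) (g i) -
          gram (phiT π V T) (a j) (g j) (a i) (g i))) :=
  stmt15_general φ π V hrep hdil T hT hT0 hT1
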